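/- Let s₁,…,s_{ℓ+1} be exchangeable, almost surely pairwise distinct real random variables, and let α ∈ [0,1] with ℓ ≥ 1. Then α ≤ P(|{i : s_i ≥ s_{ℓ+1}}|/(ℓ+1) > 1 − α) ≤ α + 1/(ℓ+1); hence this probability tends to α as ℓ → ∞. -/

import Mathlib

/-!
By exchangeability every index has the same probability that its descending rank satisfies a
given condition. Almost surely the ranks form a permutation of `1, …, N`, so summing over the
indices shows that this probability is exactly the proportion of `k ∈ {1, …, N}` satisfying the
condition. For `k / N > 1 - α` that proportion is `(N - ⌊(1 - α) N⌋) / N ∈ [α, α + 1 / N]`.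
-/

open MeasureTheory Finset Function
open scoped ENNReal

section DescRank

variable {ι β : Type*} [Fintype ι] [LinearOrder β]

def descRank (v : ι → β) (j : ι) : ℕ := #{i | v j ≤ v i}

lemma descRank_comp_perm (v : ι → β) (σ : Equiv.Perm ι) (j : ι) :
    descRank (v ∘ σ) j = descRank v (σ j) :=
  card_bij' (fun i _ => σ i) (fun i _ => σ.symm i) (by simp) (by simp) (by simp) (by simp)

lemma descRank_mem_Icc (v : ι → β) (j : ι) : descRank v j ∈ Icc 1 (Fintype.card ι) :=
  mem_Icc.2 ⟨card_pos.2 ⟨j, by simp⟩, card_le_univ _⟩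

lemma descRank_lt_descRank_of_lt {v : ι → β} {a b : ι} (h : v a < v b) :
    descRank v b < descRank v a := by
  refine card_lt_card ((ssubset_iff_of_subset fun i hi => ?_).2 ⟨a, by simp, by simpa using h⟩)
  simp only [mem_filter, mem_univ, true_and] at hi ⊢
  exact h.le.trans hi

lemma descRank_injective {v : ι → β} (hv : Injective v) : Injective (descRank v) := by
  intro a b hab
  by_contra hne
  rcases (hv.ne hne).lt_or_gt with h | h
  · exact (descRank_lt_descRank_of_lt h).ne' hab
  · exact (descRank_lt_descRank_of_lt h).ne hab

lemma image_descRank {v : ι → β} (hv : Injective v) :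
    univ.image (descRank v) = Icc 1 (Fintype.card ι) := by
  refine eq_of_subset_of_card_le (fun k hk => ?_) ?_
  · obtain ⟨j, -, rfl⟩ := mem_image.1 hk
    exact descRank_mem_Icc v j
  · rw [Nat.card_Icc, card_image_of_injective _ (descRank_injective hv), card_univ]
    omega

lemma card_filter_descRank {v : ι → β} (hv : Injective v) (p : ℕ → Prop) [DecidablePred p] :
    #{j | p (descRank v j)} = #{k ∈ Icc 1 (Fintype.card ι) | p k} := by
  rw [← image_descRank hv, filter_image, card_image_of_injective _ (descRank_injective hv)]

end DescRank

lemma card_Icc_filter_lt (N : ℕ) {t : ℝ} (ht : 0 ≤ t) :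
    #{k ∈ Icc 1 N | t < ((k : ℕ) : ℝ)} = N - ⌊t⌋₊ := by
  have : {k ∈ Icc 1 N | t < ((k : ℕ) : ℝ)} = Ioc ⌊t⌋₊ N := by
    ext k
    simp only [mem_filter, mem_Icc, mem_Ioc, ← Nat.floor_lt ht]
    omega
  rw [this, Nat.card_Ioc]

lemma card_Icc_filter_one_sub_lt_div_mem_Icc {N : ℕ} (hN : 0 < N) {α : ℝ}
    (hα : α ∈ Set.Icc 0 1) :
    (#{k ∈ Icc 1 N | 1 - α < ((k : ℕ) : ℝ) / N} : ℝ) / N ∈ Set.Icc α (α + 1 / N) := by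
  obtain ⟨hα0, hα1⟩ := hα
  have hN' : (0 : ℝ) < N := Nat.cast_pos.2 hN
  have ht : 0 ≤ (1 - α) * N := by nlinarith
  have hfloor : ⌊(1 - α) * N⌋₊ ≤ N := Nat.floor_le_of_le (by nlinarith)
  simp_rw [lt_div_iff₀ hN']
  rw [card_Icc_filter_lt N ht, Nat.cast_sub hfloor, Set.mem_Icc, le_div_iff₀ hN', div_le_iff₀ hN',
    add_mul, one_div_mul_cancel hN'.ne']
  have := Nat.floor_le ht
  have := Nat.lt_floor_add_one ((1 - α) * N)
  constructor <;> nlinarith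

lemma measurable_descRank {ι : Type*} [Fintype ι] (j : ι) :
    Measurable fun v : ι → ℝ => descRank v j := by
  simp_rw [descRank, card_filter]
  exact Finset.measurable_sum _ fun i _ => Measurable.ite
    (measurableSet_le (measurable_pi_apply j) (measurable_pi_apply i))
    measurable_const measurable_const

def Exchangeable {Ω ι β : Type*} [MeasurableSpace Ω] [MeasurableSpace β]
    (μ : Measure Ω) (X : Ω → ι → β) : Prop :=
  ∀ σ : Equiv.Perm ι, μ.map (fun ω => X ω ∘ σ) = μ.map X

namespace Exchangeable

variable {Ω ι : Type*} [MeasurableSpace Ω] [Fintype ι] {μ : Measure Ω} {X : Ω → ι → ℝ}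

lemma measure_descRank_eq (hX : Exchangeable μ X) (hXm : Measurable X) (p : ℕ → Prop)
    (i j : ι) : μ {ω | p (descRank (X ω) i)} = μ {ω | p (descRank (X ω) j)} := by
  classical
  have hB : MeasurableSet {v : ι → ℝ | p (descRank v j)} :=
    measurable_descRank j (MeasurableSet.of_discrete (s := {k | p k}))
  have hσ : Measurable fun ω => X ω ∘ Equiv.swap i j :=
    measurable_pi_lambda _ fun k => measurable_pi_apply _ |>.comp hXm
  have := congrArg (· {v : ι → ℝ | p (descRank v j)}) (hX (Equiv.swap i j))
  simp only [Measure.map_apply hσ hB, Measure.map_apply hXm hB] at this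
  simpa only [Set.preimage_ofPred_eq, descRank_comp_perm, Equiv.swap_apply_right] using this

lemma card_mul_measure_descRank [IsProbabilityMeasure μ] (hX : Exchangeable μ X)
    (hXm : Measurable X) (hinj : ∀ᵐ ω ∂μ, Injective (X ω)) (p : ℕ → Prop) [DecidablePred p]
    (j : ι) :
    Fintype.card ι * μ {ω | p (descRank (X ω) j)} = #{k ∈ Icc 1 (Fintype.card ι) | p k} := by
  set A : ι → Set Ω := fun i => {ω | p (descRank (X ω) i)}
  have hA : ∀ i, MeasurableSet (A i) := fun i =>
    (measurable_descRank i).comp hXm (MeasurableSet.of_discrete (s := {k | p k}))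
  calc Fintype.card ι * μ (A j) = ∑ i, μ (A i) := by
        simp [A, hX.measure_descRank_eq hXm p _ j]
    _ = ∫⁻ ω, ∑ i, (A i).indicator 1 ω ∂μ := by
        rw [lintegral_finsetSum _ fun i _ => measurable_one.indicator (hA i)]
        simp [lintegral_indicator_one (hA _)]
    _ = ∫⁻ _, (#{k ∈ Icc 1 (Fintype.card ι) | p k} : ℝ≥0∞) ∂μ := by
        refine lintegral_congr_ae (hinj.mono fun ω hω => ?_)
        rw [← card_filter_descRank hω, card_filter, Nat.cast_sum]
        simp [A, Set.indicator_apply]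
    _ = #{k ∈ Icc 1 (Fintype.card ι) | p k} := by simp

lemma measureReal_descRank [IsProbabilityMeasure μ] (hX : Exchangeable μ X)
    (hXm : Measurable X) (hinj : ∀ᵐ ω ∂μ, Injective (X ω)) (p : ℕ → Prop) [DecidablePred p]
    (j : ι) :
    μ.real {ω | p (descRank (X ω) j)} =
      #{k ∈ Icc 1 (Fintype.card ι) | p k} / (Fintype.card ι : ℝ) := by
  have hN : (Fintype.card ι : ℝ) ≠ 0 := Nat.cast_ne_zero.2 (Fintype.card_pos_iff.2 ⟨j⟩).ne'
  rw [eq_div_iff hN, mul_comm, measureReal_def]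
  simpa only [ENNReal.toReal_mul, ENNReal.toReal_natCast] using
    congrArg ENNReal.toReal (hX.card_mul_measure_descRank hXm hinj p j)

theorem measureReal_conformal_mem_Icc [IsProbabilityMeasure μ] (hX : Exchangeable μ X)
    (hXm : Measurable X) (hinj : ∀ᵐ ω ∂μ, Injective (X ω)) {α : ℝ} (hα : α ∈ Set.Icc 0 1)
    (j : ι) :
    μ.real {ω | (descRank (X ω) j : ℝ) / Fintype.card ι > 1 - α} ∈
      Set.Icc α (α + 1 / Fintype.card ι) := by
  rw [hX.measureReal_descRank hXm hinj (fun k => 1 - α < (k : ℝ) / Fintype.card ι)]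
  exact card_Icc_filter_one_sub_lt_div_mem_Icc (Fintype.card_pos_iff.2 ⟨j⟩) hα

end Exchangeable

theorem conformal_two_sided_validity {Ω : Type*} [MeasurableSpace Ω]
    (μ : Measure Ω) [IsProbabilityMeasure μ]
    (s : (ℓ : ℕ) → Fin (ℓ + 1) → Ω → ℝ)
    (hmeas : ∀ ℓ, ∀ i, Measurable (s ℓ i))
    (hexch : ∀ ℓ, ∀ σ : Equiv.Perm (Fin (ℓ + 1)),
      Measure.map (fun ω => fun i => s ℓ (σ i) ω) μ
        = Measure.map (fun ω => fun i => s ℓ i ω) μ)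
    (hdist : ∀ ℓ, ∀ᵐ ω ∂μ, ∀ i j : Fin (ℓ + 1), i ≠ j → s ℓ i ω ≠ s ℓ j ω)
    (α : ℝ) (hα : α ∈ Set.Icc (0:ℝ) 1) :
    (∀ ℓ : ℕ, 1 ≤ ℓ →
      ENNReal.ofReal α ≤
        μ {ω | (((Finset.univ.filter
            (fun i : Fin (ℓ + 1) => s ℓ (Fin.last ℓ) ω ≤ s ℓ i ω)).card : ℝ) / (ℓ + 1)
          > 1 - α)} ∧
      μ {ω | (((Finset.univ.filter
            (fun i : Fin (ℓ + 1) => s ℓ (Fin.last ℓ) ω ≤ s ℓ i ω)).card : ℝ) / (ℓ + 1)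
          > 1 - α)} ≤ ENNReal.ofReal (α + 1 / (ℓ + 1))) ∧
    Filter.Tendsto (fun ℓ : ℕ =>
        (μ {ω | (((Finset.univ.filter
            (fun i : Fin (ℓ + 1) => s ℓ (Fin.last ℓ) ω ≤ s ℓ i ω)).card : ℝ) / (ℓ + 1)
          > 1 - α)}).toReal)
      Filter.atTop (nhds α) := by
  have hbounds : ∀ ℓ : ℕ, μ.real {ω | (((Finset.univ.filter
      (fun i : Fin (ℓ + 1) => s ℓ (Fin.last ℓ) ω ≤ s ℓ i ω)).card : ℝ) / (ℓ + 1) > 1 - α)} ∈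
      Set.Icc α (α + 1 / (ℓ + 1)) := fun ℓ => by
    have hinj : ∀ᵐ ω ∂μ, Injective fun i => s ℓ i ω :=
      (hdist ℓ).mono fun ω hω i j h => not_imp_not.1 (hω i j) h
    have := Exchangeable.measureReal_conformal_mem_Icc (X := fun ω i => s ℓ i ω) (hexch ℓ)
      (measurable_pi_lambda _ (hmeas ℓ)) hinj hα (Fin.last ℓ)
    simp only [Fintype.card_fin, Nat.cast_add, Nat.cast_one] at this
    exact this
  refine ⟨fun ℓ _ => ⟨ENNReal.ofReal_le_of_le_toReal (hbounds ℓ).1, ?_⟩, ?_⟩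
  · exact (ENNReal.le_ofReal_iff_toReal_le (measure_ne_top _ _)
      (measureReal_nonneg.trans (hbounds ℓ).2)).2 (hbounds ℓ).2
  · refine tendsto_of_tendsto_of_tendsto_of_le_of_le tendsto_const_nhds ?_
      (fun ℓ => (hbounds ℓ).1) (fun ℓ => (hbounds ℓ).2)
    simpa using tendsto_one_div_add_atTop_nhds_zero_nat.const_add α
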